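/- arXiv:math/0512543 — 2 statements merged into one kernel-verified Lean document; each statement's English description precedes it below -/
import Mathlib

section
/- (Antiholomorphic involution on Floquet solutions.) Let Λ ⊂ ℂ be a lattice, let U : ℂ → ℂ be Λ-periodic, and let ψ = (ψ₁, ψ₂) : ℂ → ℂ² be a differentiable solution of the Dirac equation ∂ψ₂ = −Uψ₁, ∂̄ψ₁ = Ū·ψ₂ (the operator with potentials U and V = Ū) which is a Floquet function with quasimomenta k = (k₁, k₂) ∈ ℂ², i.e. ψ(z + γ) = e^{2πi(k₁γ¹ + k₂γ²)} ψ(z) for all γ = γ¹ + iγ² ∈ Λ. Then ψ* = (−conj(ψ₂), conj(ψ₁)) is also a solution of the same Dirac equation and is a Floquet function with quasimomenta −k̄ = (−conj(k₁), −conj(k₂)): ψ*(z + γ) = e^{2πi(−conj(k₁)γ¹ − conj(k₂)γ²)} ψ*(z) for all γ ∈ Λ. -/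
/-- The Wirtinger derivative `∂f = (1/2)(∂f/∂x − i ∂f/∂y)`. -/
noncomputable def wDeriv (f : ℂ → ℂ) (z : ℂ) : ℂ :=
  (fderiv ℝ f z 1 - Complex.I * fderiv ℝ f z Complex.I) / 2

/-- The Wirtinger derivative `∂̄f = (1/2)(∂f/∂x + i ∂f/∂y)`. -/
noncomputable def wDerivBar (f : ℂ → ℂ) (z : ℂ) : ℂ :=
  (fderiv ℝ f z 1 + Complex.I * fderiv ℝ f z Complex.I) / 2

/-!
Complex conjugation is an `ℝ`-linear isometry, so `fderiv ℝ (conj ∘ f) = conj ∘ fderiv ℝ f`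
(both sides vanish where `f` is not differentiable); since `conj I = -I`, it interchanges
`∂` and `∂̄`. Conjugating the Dirac system for `ψ` therefore gives the system for
`ψ* = (-ψ̄₂, ψ̄₁)`, and conjugating the Floquet multiplier `exp (2πi ⟨k, γ⟩)` turns `k` into `-k̄`.
-/

open ComplexConjugate

lemma fderiv_conj_apply {E : Type*} [NormedAddCommGroup E] [NormedSpace ℝ E]
    (f : E → ℂ) (x v : E) :
    fderiv ℝ (fun w => conj (f w)) x v = conj (fderiv ℝ f x v) := by
  change fderiv ℝ (Complex.conjCLE ∘ f) x v = _
  rw [Complex.conjCLE.comp_fderiv]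
  rfl

lemma wDeriv_conj (f : ℂ → ℂ) (z : ℂ) :
    wDeriv (fun w => conj (f w)) z = conj (wDerivBar f z) := by
  simp only [wDeriv, wDerivBar, fderiv_conj_apply, map_div₀, map_add, map_mul,
    Complex.conj_I, map_ofNat]
  ring

lemma wDerivBar_conj (f : ℂ → ℂ) (z : ℂ) :
    wDerivBar (fun w => conj (f w)) z = conj (wDeriv f z) := by
  simp only [wDeriv, wDerivBar, fderiv_conj_apply, map_div₀, map_sub, map_mul,
    Complex.conj_I, map_ofNat]
  ring

lemma wDerivBar_neg (f : ℂ → ℂ) (z : ℂ) :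
    wDerivBar (fun w => -f w) z = -wDerivBar f z := by
  simp only [wDerivBar, fderiv_fun_neg, neg_apply]
  ring

lemma conj_exp_two_pi_I_mul (a b : ℂ) (x y : ℝ) :
    conj (Complex.exp (2 * Real.pi * Complex.I * (a * x + b * y)))
      = Complex.exp (2 * Real.pi * Complex.I * (-conj a * x + -conj b * y)) := by
  rw [← Complex.exp_conj]
  congr 1
  simp only [map_mul, map_add, Complex.conj_I, Complex.conj_ofReal, map_ofNat]
  ring

theorem floquet_antiholomorphic_involution_general (Λ : AddSubgroup ℂ) (U : ℂ → ℂ)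
    (ψ₁ ψ₂ : ℂ → ℂ) (k₁ k₂ : ℂ)
    (hD₂ : ∀ z : ℂ, wDeriv ψ₂ z = -(U z) * ψ₁ z)
    (hD₁ : ∀ z : ℂ, wDerivBar ψ₁ z = starRingEnd ℂ (U z) * ψ₂ z)
    (hFl₁ : ∀ z : ℂ, ∀ γ ∈ Λ,
      ψ₁ (z + γ) = Complex.exp (2 * Real.pi * Complex.I * (k₁ * γ.re + k₂ * γ.im)) * ψ₁ z)
    (hFl₂ : ∀ z : ℂ, ∀ γ ∈ Λ,
      ψ₂ (z + γ) = Complex.exp (2 * Real.pi * Complex.I * (k₁ * γ.re + k₂ * γ.im)) * ψ₂ z) :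
    (∀ z : ℂ, wDeriv (fun w => starRingEnd ℂ (ψ₁ w)) z
        = -(U z) * (-(starRingEnd ℂ (ψ₂ z))))
    ∧ (∀ z : ℂ, wDerivBar (fun w => -(starRingEnd ℂ (ψ₂ w))) z
        = starRingEnd ℂ (U z) * starRingEnd ℂ (ψ₁ z))
    ∧ (∀ z : ℂ, ∀ γ ∈ Λ,
      -(starRingEnd ℂ (ψ₂ (z + γ)))
        = Complex.exp (2 * Real.pi * Complex.I
            * ((-(starRingEnd ℂ k₁)) * γ.re + (-(starRingEnd ℂ k₂)) * γ.im))
          * (-(starRingEnd ℂ (ψ₂ z))))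
    ∧ (∀ z : ℂ, ∀ γ ∈ Λ,
      starRingEnd ℂ (ψ₁ (z + γ))
        = Complex.exp (2 * Real.pi * Complex.I
            * ((-(starRingEnd ℂ k₁)) * γ.re + (-(starRingEnd ℂ k₂)) * γ.im))
          * starRingEnd ℂ (ψ₁ z)) := by
  refine ⟨fun z => ?_, fun z => ?_, fun z γ hγ => ?_, fun z γ hγ => ?_⟩
  · rw [wDeriv_conj, hD₁, map_mul, Complex.conj_conj, neg_mul_neg]
  · rw [wDerivBar_neg, wDerivBar_conj, hD₂, map_mul, map_neg, neg_mul, neg_neg]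
  · rw [hFl₂ z γ hγ, map_mul, conj_exp_two_pi_I_mul, mul_neg]
  · rw [hFl₁ z γ hγ, map_mul, conj_exp_two_pi_I_mul]

/-- Antiholomorphic involution on Floquet solutions: if `ψ` solves the Dirac
equation with potentials `(U, Ū)` (`U` being `Λ`-periodic) and is a Floquet function with
quasimomenta `k = (k₁, k₂)`, then `ψ* = (−ψ̄₂, ψ̄₁)` solves the same equation and is a
Floquet function with quasimomenta `−k̄`. -/
theorem floquet_antiholomorphic_involution (Λ : AddSubgroup ℂ) (U : ℂ → ℂ)
    (ψ₁ ψ₂ : ℂ → ℂ) (k₁ k₂ : ℂ)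
    (hψ₁ : Differentiable ℝ ψ₁) (hψ₂ : Differentiable ℝ ψ₂)
    (hUper : ∀ z : ℂ, ∀ γ ∈ Λ, U (z + γ) = U z)
    (hD₂ : ∀ z : ℂ, wDeriv ψ₂ z = -(U z) * ψ₁ z)
    (hD₁ : ∀ z : ℂ, wDerivBar ψ₁ z = starRingEnd ℂ (U z) * ψ₂ z)
    (hFl₁ : ∀ z : ℂ, ∀ γ ∈ Λ,
      ψ₁ (z + γ) = Complex.exp (2 * Real.pi * Complex.I * (k₁ * γ.re + k₂ * γ.im)) * ψ₁ z)
    (hFl₂ : ∀ z : ℂ, ∀ γ ∈ Λ,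
      ψ₂ (z + γ) = Complex.exp (2 * Real.pi * Complex.I * (k₁ * γ.re + k₂ * γ.im)) * ψ₂ z) :
    (∀ z : ℂ, wDeriv (fun w => starRingEnd ℂ (ψ₁ w)) z
        = -(U z) * (-(starRingEnd ℂ (ψ₂ z))))
    ∧ (∀ z : ℂ, wDerivBar (fun w => -(starRingEnd ℂ (ψ₂ w))) z
        = starRingEnd ℂ (U z) * starRingEnd ℂ (ψ₁ z))
    ∧ (∀ z : ℂ, ∀ γ ∈ Λ,
      -(starRingEnd ℂ (ψ₂ (z + γ)))
        = Complex.exp (2 * Real.pi * Complex.I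
            * ((-(starRingEnd ℂ k₁)) * γ.re + (-(starRingEnd ℂ k₂)) * γ.im))
          * (-(starRingEnd ℂ (ψ₂ z))))
    ∧ (∀ z : ℂ, ∀ γ ∈ Λ,
      starRingEnd ℂ (ψ₁ (z + γ))
        = Complex.exp (2 * Real.pi * Complex.I
            * ((-(starRingEnd ℂ k₁)) * γ.re + (-(starRingEnd ℂ k₂)) * γ.im))
          * starRingEnd ℂ (ψ₁ z)) :=
  floquet_antiholomorphic_involution_general Λ U ψ₁ ψ₂ k₁ k₂ hD₂ hD₁ hFl₁ hFl₂
end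

section
/- (Dressing identity for the Dirac pencil.) Let a, b, U, V : ℂ → ℂ be smooth, k = (k₁, k₂) ∈ ℂ², and let T_k denote the matrix with zero diagonal and off-diagonal entries πi(k₁ − ik₂) (top right) and −πi(k₁ + ik₂) (bottom left). Then for every smooth ψ : ℂ → ℂ²: diag(e^{−a}, e^{−b}) · [𝒟₀ + diag(U, V) + T_k]( diag(e^{b}, e^{a}) ψ ) = [𝒟₀ + diag(e^{b−a} U, e^{a−b} V) + T_k + M] ψ, where M is the matrix with zero diagonal, top-right entry ∂a and bottom-left entry −∂̄b, and 𝒟₀ψ = (∂ψ₂, −∂̄ψ₁). -/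
lemma fderiv_exp_comp_apply (f : ℂ → ℂ) (hf : Differentiable ℝ f) (z v : ℂ) :
    fderiv ℝ (fun w => Complex.exp (f w)) z v = Complex.exp (f z) * fderiv ℝ f z v := by
  have h := ((Complex.hasDerivAt_exp (f z)).hasFDerivAt.restrictScalars ℝ).comp z
    (hf z).hasFDerivAt
  rw [show (fun w => Complex.exp (f w)) = Complex.exp ∘ f from rfl, h.fderiv]
  simp [mul_comm]

lemma wDeriv_mul (f g : ℂ → ℂ) (hf : Differentiable ℝ f) (hg : Differentiable ℝ g) (z : ℂ) :
    wDeriv (fun w => f w * g w) z = wDeriv f z * g z + f z * wDeriv g z := by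
  unfold wDeriv
  rw [fderiv_fun_mul (hf z) (hg z)]
  simp only [ContinuousLinearMap.add_apply, ContinuousLinearMap.smul_apply, smul_eq_mul]
  ring

lemma wDerivBar_mul (f g : ℂ → ℂ) (hf : Differentiable ℝ f) (hg : Differentiable ℝ g) (z : ℂ) :
    wDerivBar (fun w => f w * g w) z = wDerivBar f z * g z + f z * wDerivBar g z := by
  unfold wDerivBar
  rw [fderiv_fun_mul (hf z) (hg z)]
  simp only [ContinuousLinearMap.add_apply, ContinuousLinearMap.smul_apply, smul_eq_mul]
  ring

lemma wDeriv_exp (f : ℂ → ℂ) (hf : Differentiable ℝ f) (z : ℂ) :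
    wDeriv (fun w => Complex.exp (f w)) z = Complex.exp (f z) * wDeriv f z := by
  unfold wDeriv
  rw [fderiv_exp_comp_apply f hf, fderiv_exp_comp_apply f hf]
  ring

lemma wDerivBar_exp (f : ℂ → ℂ) (hf : Differentiable ℝ f) (z : ℂ) :
    wDerivBar (fun w => Complex.exp (f w)) z = Complex.exp (f z) * wDerivBar f z := by
  unfold wDerivBar
  rw [fderiv_exp_comp_apply f hf, fderiv_exp_comp_apply f hf]
  ring

/-- Dressing identity for the Dirac pencil:
`diag(e^{−a}, e^{−b}) [𝒟₀ + diag(U,V) + T_k](diag(e^{b}, e^{a})ψ)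
  = [𝒟₀ + diag(e^{b−a}U, e^{a−b}V) + T_k + M]ψ`,
where `T_k` has off-diagonal entries `πi(k₁ − ik₂)` and `−πi(k₁ + ik₂)`, and `M` has
top-right entry `∂a` and bottom-left entry `−∂̄b`. (Stated componentwise, with
`𝒟₀ψ = (∂ψ₂, −∂̄ψ₁)`.) -/
theorem dirac_pencil_dressing_identity (a b U V : ℂ → ℂ) (k₁ k₂ : ℂ) (ψ₁ ψ₂ : ℂ → ℂ)
    (ha : ContDiff ℝ (⊤ : ℕ∞) a) (hb : ContDiff ℝ (⊤ : ℕ∞) b)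
    (hU : ContDiff ℝ (⊤ : ℕ∞) U) (hV : ContDiff ℝ (⊤ : ℕ∞) V)
    (hψ₁ : ContDiff ℝ (⊤ : ℕ∞) ψ₁) (hψ₂ : ContDiff ℝ (⊤ : ℕ∞) ψ₂) :
    (∀ z : ℂ,
      Complex.exp (-(a z))
          * (wDeriv (fun w => Complex.exp (a w) * ψ₂ w) z
            + U z * (Complex.exp (b z) * ψ₁ z)
            + Real.pi * Complex.I * (k₁ - Complex.I * k₂) * (Complex.exp (a z) * ψ₂ z))
        = wDeriv ψ₂ z + Complex.exp (b z - a z) * U z * ψ₁ z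
            + Real.pi * Complex.I * (k₁ - Complex.I * k₂) * ψ₂ z
            + wDeriv a z * ψ₂ z)
    ∧ (∀ z : ℂ,
      Complex.exp (-(b z))
          * (-(wDerivBar (fun w => Complex.exp (b w) * ψ₁ w) z)
            + V z * (Complex.exp (a z) * ψ₂ z)
            - Real.pi * Complex.I * (k₁ + Complex.I * k₂) * (Complex.exp (b z) * ψ₁ z))
        = -(wDerivBar ψ₁ z) + Complex.exp (a z - b z) * V z * ψ₂ z
            - Real.pi * Complex.I * (k₁ + Complex.I * k₂) * ψ₁ z
            - wDerivBar b z * ψ₁ z) := by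
  have da := ha.differentiable (by simp)
  have db := hb.differentiable (by simp)
  have d1 := hψ₁.differentiable (by simp)
  have d2 := hψ₂.differentiable (by simp)
  have dea : Differentiable ℝ (fun w => Complex.exp (a w)) :=
    fun z => (Complex.differentiable_exp (𝕜 := ℂ) _).restrictScalars ℝ |>.comp z (da z)
  have deb : Differentiable ℝ (fun w => Complex.exp (b w)) :=
    fun z => (Complex.differentiable_exp (𝕜 := ℂ) _).restrictScalars ℝ |>.comp z (db z)
  constructor
  · intro z
    rw [wDeriv_mul _ _ dea d2 z, wDeriv_exp a da z,
      Complex.exp_sub, Complex.exp_neg]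
    field_simp [Complex.exp_ne_zero]
    ring
  · intro z
    rw [wDerivBar_mul _ _ deb d1 z, wDerivBar_exp b db z,
      Complex.exp_sub, Complex.exp_neg]
    field_simp [Complex.exp_ne_zero]
    ring
end
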